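/- arXiv:1904.03313 — 2 statements merged into one kernel-verified Lean document; each statement's English description precedes it below -/
import Mathlib

section
/- Let G = (V,E) be a locally finite graph carrying the observation model, let S ⊆ B be finite subsets of V, and let u ∈ S. Then for every ε ∈ [0,1]: I( θ_u ; θ_{∂S} | Y^{(ε)}_B ) ≤ I( θ_u ; θ_{∂S} | Y^{(ε)}_S ), where θ_{∂S} = (θ_v)_{v∈∂S} and ∂S = {w ∈ S : ∃v ∉ S, (w,v) ∈ E}. -/
open MeasureTheory ProbabilityTheory Filter
open scoped ENNReal Classical

noncomputable section

def gball {V : Type*} (G : SimpleGraph V) (u : V) (l : ℕ) : Set V :=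
  {v | ∃ w : G.Walk u v, w.length ≤ l}

def vBoundary {V : Type*} (G : SimpleGraph V) (S : Set V) : Set V :=
  {u | u ∈ S ∧ ∃ v, v ∉ S ∧ G.Adj u v}

def Amenable {V : Type*} (G : SimpleGraph V) : Prop :=
  ∀ δ : ℝ, 0 < δ → ∃ S : Set V, S.Finite ∧ S.Nonempty ∧
    ((vBoundary G S).ncard : ℝ) < δ * (S.ncard : ℝ)

def VertexTransitive {V : Type*} (G : SimpleGraph V) : Prop :=
  ∀ u v : V, ∃ φ : G ≃g G, φ u = v

def LocallyFiniteGraph {V : Type*} (G : SimpleGraph V) : Prop :=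
  ∀ v : V, (G.neighborSet v).Finite

def graphOf {V : Type*} (E : Set (V × V)) : SimpleGraph V :=
  SimpleGraph.fromRel (fun u v => (u, v) ∈ E)

def BallIso {V W : Type*} (G : SimpleGraph V) (u : V) (H : SimpleGraph W) (o : W)
    (l : ℕ) : Prop :=
  ∃ φ : gball G u l ≃ gball H o l,
    (∀ hu : u ∈ gball G u l, ((φ ⟨u, hu⟩ : gball H o l) : W) = o) ∧
      ∀ a b : gball G u l, G.Adj a b ↔ H.Adj (φ a) (φ b)

def LocalWeakLimit {W : Type*} (Gn : ∀ n : ℕ, SimpleGraph (Fin n))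
    (H : SimpleGraph W) (o : W) : Prop :=
  ∀ l : ℕ, Tendsto
    (fun n : ℕ => (Nat.card {u : Fin n // BallIso (Gn n) u H o l} : ℝ) / n) atTop (nhds 1)

structure Model (X Y' : Type*) {V : Type*} (Q : X → X → Y' → ℝ) (E : Set (V × V))
    [Fintype X] [Fintype Y'] where
  Ω : Type
  mΩ : MeasurableSpace Ω
  P : @Measure Ω mΩ
  probP : @IsProbabilityMeasure Ω mΩ P
  θ : V → Ω → X
  Yobs : V × V → Ω → Y'
  U : V → Ω → ℝ
  measθ : ∀ v, @Measurable Ω X mΩ ⊤ (θ v)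
  measY : ∀ e, @Measurable Ω Y' mΩ ⊤ (Yobs e)
  measU : ∀ v, @Measurable Ω ℝ mΩ _ (U v)
  lawθY : ∀ (S : Finset V) (F : Finset (V × V)),
    (∀ e ∈ F, e ∈ E ∧ e.1 ∈ S ∧ e.2 ∈ S) →
    ∀ (σ : V → X) (y : V × V → Y'),
      (P {ω | (∀ v ∈ S, θ v ω = σ v) ∧ ∀ e ∈ F, Yobs e ω = y e}).toReal
        = ((Fintype.card X : ℝ)⁻¹) ^ S.card * ∏ e ∈ F, Q (σ e.1) (σ e.2) (y e)
  lawU : ∀ (T : Finset V) (a : V → ℝ), (∀ v, a v ∈ Set.Icc (0:ℝ) 1) →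
    ∀ (S : Finset V) (F : Finset (V × V)) (σ : V → X) (y : V × V → Y'),
      (P {ω | (∀ v ∈ T, U v ω ≤ a v) ∧ (∀ v ∈ S, θ v ω = σ v) ∧
          ∀ e ∈ F, Yobs e ω = y e}).toReal
        = (∏ v ∈ T, a v) *
          (P {ω | (∀ v ∈ S, θ v ω = σ v) ∧ ∀ e ∈ F, Yobs e ω = y e}).toReal

attribute [instance] Model.mΩ

namespace Model

variable {X Y' V : Type*} [Fintype X] [Fintype Y'] {Q : X → X → Y' → ℝ} {E : Set (V × V)}

def ξ (M : Model X Y' Q E) (ε : ℝ) (v : V) (ω : M.Ω) : Option X :=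
  if M.U v ω ≤ ε then some (M.θ v ω) else none

def obsAlg (M : Model X Y' Q E) (ε : ℝ) (S : Set V) : MeasurableSpace M.Ω :=
  (⨆ e ∈ {e : V × V | e ∈ E ∧ e.1 ∈ S ∧ e.2 ∈ S}, MeasurableSpace.comap (M.Yobs e) ⊤) ⊔
    ⨆ v ∈ S, MeasurableSpace.comap (M.ξ ε v) ⊤

def marg (M : Model X Y' Q E) (ε : ℝ) (S : Set V) (u : V) (x : X) : M.Ω → ℝ :=
  M.P[Set.indicator {ω | M.θ u ω = x} (fun _ => (1 : ℝ)) | M.obsAlg ε S]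

end Model

def riskOf {X Y' : Type*} [Fintype X] [Fintype Y'] {n : ℕ} {Q : X → X → Y' → ℝ}
    {E : Set (Fin n × Fin n)} (M : Model X Y' Q E) (f : X → ℝ)
    (Xh : M.Ω → Fin n → Fin n → ℝ) : ℝ :=
  ((n : ℝ) ^ 2)⁻¹ * ∫ ω, (∑ u, ∑ v, (f (M.θ u ω) * f (M.θ v ω) - Xh ω u v) ^ 2) ∂M.P


/-- Shannon entropy of (the law of) a random variable with (essentially) finitely many
values, with the convention 0 log 0 = 0. -/
def entropy {Ω α : Type*} [MeasurableSpace Ω] (P : Measure Ω) (Z : Ω → α) : ℝ :=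
  -∑' a : α, ((P (Z ⁻¹' {a})).toReal * Real.log (P (Z ⁻¹' {a})).toReal)

/-- Conditional mutual information I(A;B|C) = H(A,C) + H(B,C) - H(A,B,C) - H(C). -/
def condMI {Ω α β γ : Type*} [MeasurableSpace Ω] (P : Measure Ω)
    (A : Ω → α) (B : Ω → β) (C : Ω → γ) : ℝ :=
  entropy P (fun ω => (A ω, C ω)) + entropy P (fun ω => (B ω, C ω))
    - entropy P (fun ω => (A ω, B ω, C ω)) - entropy P C

namespace Model

variable {X Y' V : Type*} [Fintype X] [Fintype Y'] {Q : X → X → Y' → ℝ} {E : Set (V × V)}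

/-- The labels on a subset of vertices, as a single (masked) random variable. -/
def thetaOn (M : Model X Y' Q E) (S : Set V) : M.Ω → (V → Option X) :=
  fun ω v => if v ∈ S then some (M.θ v ω) else none

/-- All the observations available in the region S (edge observations on edges inside S
and side information on S), as a single (masked) random variable. -/
def obsRV (M : Model X Y' Q E) (ε : ℝ) (S : Set V) :
    M.Ω → (V × V → Option Y') × (V → Option (Option X)) :=
  fun ω =>
    (fun e => if e ∈ E ∧ e.1 ∈ S ∧ e.2 ∈ S then some (M.Yobs e ω) else none,
     fun v => if v ∈ S then some (M.ξ ε v ω) else none)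

end Model


/-!
Write `∂S` for the inner boundary of `S` and `B = S ∪ R` with `S`, `R` disjoint. The joint law of
a labelling `τ` of `B` and of the observations on `B` is a product of one factor per vertex
(label prior and side information) and one per edge (the kernel `Q`). Every edge of `B` that
is not inside `S` has its endpoints in `∂S ∪ R`, so once the labels on `∂S` are fixed the sum
over `τ` splits into a sum over labellings of `S` and one over labellings of `R`. Hence
`P(θ_u, θ_∂S, Y_B)` factorizes as `F(θ_u, θ_∂S, Y_S) · G(θ_∂S, Y_B)`, which says that `θ_u` and
`Y_B` are conditionally independent given `(θ_∂S, Y_S)`; by the chain rule, this independence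
and `I(θ_u; Y_B | Y_S) ≥ 0` give the inequality.
-/

local infix:25 " →ₛ " => SimpleFunc

section ConditionalMutualInformation

open Real

variable {Ω α β γ δ : Type*} [MeasurableSpace Ω] (P : Measure Ω)

lemma SimpleFunc.range_pair_subset (f : Ω →ₛ α) (g : Ω →ₛ β) :
    (f.pair g).range ⊆ f.range ×ˢ g.range := by
  intro t ht
  obtain ⟨ω, rfl⟩ := SimpleFunc.mem_range.mp ht
  simp

lemma entropy_comp_of_injective (Z : Ω → α) {f : α → β} (hf : Function.Injective f) :
    entropy P (fun ω => f (Z ω)) = entropy P Z := by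
  have hpre : ∀ a, (fun ω => f (Z ω)) ⁻¹' {f a} = Z ⁻¹' {a} := fun a => by
    ext ω; simp [hf.eq_iff]
  rw [entropy, entropy, neg_inj]
  refine tsum_eq_tsum_of_ne_zero_bij (fun a => f a.1) (fun a a' h => Subtype.ext (hf h)) ?_ ?_
  · intro b hb
    obtain ⟨ω, rfl⟩ : ∃ ω, f (Z ω) = b := by
      by_contra! h
      have : (fun ω => f (Z ω)) ⁻¹' {b} = ∅ := by ext ω; simpa using h ω
      simp [this] at hb
    exact ⟨⟨Z ω, by simpa [hpre] using hb⟩, rfl⟩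
  · intro a
    simp only [hpre]

lemma sub_div_le_mul_log {p pac pdc pc : ℝ} (hp : 0 ≤ p) (hac : p ≤ pac) (hdc : p ≤ pdc)
    (hc : p ≤ pc) :
    p - pac * pdc / pc ≤ p * (log p + log pc - log pac - log pdc) := by
  rcases hp.eq_or_lt with rfl | hp
  · simp only [zero_sub, zero_mul, neg_nonpos]
    exact div_nonneg (mul_nonneg hac hdc) hc
  have hac' := hp.trans_le hac
  have hdc' := hp.trans_le hdc
  have hc' := hp.trans_le hc
  have hlog := Real.log_le_sub_one_of_pos (show 0 < pac * pdc / (p * pc) by positivity)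
  rw [Real.log_div (by positivity) (by positivity), Real.log_mul hac'.ne' hdc'.ne',
    Real.log_mul hp.ne' hc'.ne'] at hlog
  have key : p * (pac * pdc / (p * pc)) = pac * pdc / pc := by field_simp
  nlinarith [mul_le_mul_of_nonneg_left hlog hp.le]

section FiniteMeasure

variable [IsFiniteMeasure P]

lemma measureReal_inter_preimage_eq_sum (f : Ω →ₛ α) {R : Finset α} (hR : f.range ⊆ R)
    (s : Set Ω) (t : Set α) :
    P.real (s ∩ f ⁻¹' t) = ∑ a ∈ R with a ∈ t, P.real (s ∩ f ⁻¹' {a}) := by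
  have hft : f ⁻¹' t = f ⁻¹' ↑(R.filter (· ∈ t)) := by
    ext ω
    simpa using fun _ => hR (f.mem_range_self ω)
  rw [hft, Set.inter_comm, ← measureReal_restrict_apply (f.measurableSet_preimage _),
    ← sum_measureReal_preimage_singleton _ fun a _ => f.measurableSet_fiber a]
  exact Finset.sum_congr rfl fun a _ => by
    rw [measureReal_restrict_apply (f.measurableSet_fiber a), Set.inter_comm]

lemma measureReal_preimage_eq_sum (f : Ω →ₛ α) {R : Finset α} (hR : f.range ⊆ R) (t : Set α) :
    P.real (f ⁻¹' t) = ∑ a ∈ R with a ∈ t, P.real (f ⁻¹' {a}) := by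
  simpa using measureReal_inter_preimage_eq_sum P f hR Set.univ t

lemma measureReal_eq_sum_inter_preimage (f : Ω →ₛ α) (s : Set Ω) :
    P.real s = ∑ a ∈ f.range, P.real (s ∩ f ⁻¹' {a}) := by
  simpa using measureReal_inter_preimage_eq_sum P f subset_rfl s Set.univ

lemma entropy_comp_eq_sum (Z : Ω →ₛ α) {R : Finset α} (hR : Z.range ⊆ R) (g : α → β) :
    entropy P (fun ω => g (Z ω))
      = -∑ t ∈ R, P.real (Z ⁻¹' {t}) * log (P.real ((fun ω => g (Z ω)) ⁻¹' {g t})) := by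
  have hfiber : ∀ b, P.real ((fun ω => g (Z ω)) ⁻¹' {b})
      = ∑ t ∈ R with g t = b, P.real (Z ⁻¹' {t}) :=
    fun b => measureReal_preimage_eq_sum P Z hR (g ⁻¹' {b})
  rw [entropy, neg_inj, tsum_eq_sum (s := R.image g), ← Finset.sum_fiberwise_of_maps_to
    (fun t ht => Finset.mem_image_of_mem g ht)]
  · refine Finset.sum_congr rfl fun b _ => ?_
    rw [← measureReal_def]
    nth_rw 1 [hfiber b]
    rw [Finset.sum_mul]
    exact Finset.sum_congr rfl fun t ht => by rw [(Finset.mem_filter.mp ht).2]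
  · intro b hb
    have : (fun ω => g (Z ω)) ⁻¹' {b} = ∅ := Set.eq_empty_of_forall_notMem fun ω h =>
      hb (Set.mem_singleton_iff.mp h ▸ Finset.mem_image_of_mem g (hR (Z.mem_range_self ω)))
    simp [this]

variable (A : Ω →ₛ α) (D : Ω →ₛ δ) (C : Ω →ₛ γ)

lemma condMI_eq_sum :
    condMI P A D C = ∑ t ∈ A.range ×ˢ D.range ×ˢ C.range,
      P.real (A.pair (D.pair C) ⁻¹' {t}) *
        (log (P.real (A.pair (D.pair C) ⁻¹' {t})) + log (P.real (C ⁻¹' {t.2.2}))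
          - log (P.real (A.pair C ⁻¹' {(t.1, t.2.2)})) - log (P.real (D.pair C ⁻¹' {t.2}))) := by
  set T := A.pair (D.pair C)
  have hR : T.range ⊆ A.range ×ˢ D.range ×ˢ C.range :=
    (SimpleFunc.range_pair_subset _ _).trans
      (Finset.product_subset_product subset_rfl (SimpleFunc.range_pair_subset _ _))
  have eAC : entropy P (fun ω => (A ω, C ω)) = -∑ t ∈ A.range ×ˢ D.range ×ˢ C.range,
      P.real (T ⁻¹' {t}) * log (P.real (A.pair C ⁻¹' {(t.1, t.2.2)})) :=
    entropy_comp_eq_sum P T hR fun t => (t.1, t.2.2)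
  have eDC : entropy P (fun ω => (D ω, C ω)) = -∑ t ∈ A.range ×ˢ D.range ×ˢ C.range,
      P.real (T ⁻¹' {t}) * log (P.real (D.pair C ⁻¹' {t.2})) :=
    entropy_comp_eq_sum P T hR Prod.snd
  have eADC : entropy P (fun ω => (A ω, D ω, C ω)) = -∑ t ∈ A.range ×ˢ D.range ×ˢ C.range,
      P.real (T ⁻¹' {t}) * log (P.real (T ⁻¹' {t})) :=
    entropy_comp_eq_sum P T hR id
  have eC : entropy P C = -∑ t ∈ A.range ×ˢ D.range ×ˢ C.range,
      P.real (T ⁻¹' {t}) * log (P.real (C ⁻¹' {t.2.2})) :=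
    entropy_comp_eq_sum P T hR fun t => t.2.2
  rw [condMI, eAC, eDC, eADC, eC]
  simp only [mul_add, mul_sub, Finset.sum_add_distrib, Finset.sum_sub_distrib]
  ring

lemma measureReal_pair_eq_sum_left (a : α) (c : γ) :
    P.real (A.pair C ⁻¹' {(a, c)})
      = ∑ d ∈ D.range, P.real (A.pair (D.pair C) ⁻¹' {(a, d, c)}) := by
  rw [measureReal_eq_sum_inter_preimage P D]
  refine Finset.sum_congr rfl fun d _ => congrArg P.real ?_
  ext ω
  simp only [Set.mem_inter_iff, Set.mem_preimage, SimpleFunc.pair_apply, Set.mem_singleton_iff,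
    Prod.mk.injEq]
  tauto

lemma measureReal_pair_eq_sum_right (d : δ) (c : γ) :
    P.real (D.pair C ⁻¹' {(d, c)})
      = ∑ a ∈ A.range, P.real (A.pair (D.pair C) ⁻¹' {(a, d, c)}) := by
  rw [measureReal_eq_sum_inter_preimage P A]
  refine Finset.sum_congr rfl fun a _ => congrArg P.real ?_
  ext ω
  simp only [Set.mem_inter_iff, Set.mem_preimage, SimpleFunc.pair_apply, Set.mem_singleton_iff,
    Prod.mk.injEq]
  tauto

lemma measureReal_eq_sum_pair (c : γ) :
    P.real (C ⁻¹' {c}) = ∑ a ∈ A.range, P.real (A.pair C ⁻¹' {(a, c)}) := by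
  rw [measureReal_eq_sum_inter_preimage P A]
  refine Finset.sum_congr rfl fun a _ => congrArg P.real ?_
  ext ω
  simp only [Set.mem_inter_iff, Set.mem_preimage, SimpleFunc.pair_apply, Set.mem_singleton_iff,
    Prod.mk.injEq]
  tauto

lemma condMI_eq_zero_of_factorization (f : α → γ → ℝ) (h : δ → γ → ℝ)
    (hfac : ∀ a d c, P.real (A.pair (D.pair C) ⁻¹' {(a, d, c)}) = f a c * h d c) :
    condMI P A D C = 0 := by
  have hAC : ∀ a c, P.real (A.pair C ⁻¹' {(a, c)}) = f a c * ∑ d ∈ D.range, h d c :=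
    fun a c => by simp only [measureReal_pair_eq_sum_left P A D C, Finset.mul_sum, hfac]
  have hDC : ∀ d c, P.real (D.pair C ⁻¹' {(d, c)}) = (∑ a ∈ A.range, f a c) * h d c :=
    fun d c => by simp only [measureReal_pair_eq_sum_right P A D C, Finset.sum_mul, hfac]
  have hC : ∀ c, P.real (C ⁻¹' {c}) = (∑ a ∈ A.range, f a c) * ∑ d ∈ D.range, h d c :=
    fun c => by simp only [measureReal_eq_sum_pair P A C, Finset.sum_mul, hAC]
  rw [condMI_eq_sum]
  refine Finset.sum_eq_zero fun ⟨a, d, c⟩ _ => ?_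
  rcases eq_or_ne (P.real (A.pair (D.pair C) ⁻¹' {(a, d, c)})) 0 with hp | hp
  · rw [hp, zero_mul]
  have hc : P.real (C ⁻¹' {c}) ≠ 0 := by
    refine (measureReal_nonneg.lt_of_ne' hp |>.trans_le (measureReal_mono fun ω hω => ?_)).ne'
    simp_all [Prod.ext_iff]
  rw [hfac] at hp ⊢
  rw [hC] at hc
  obtain ⟨hf, hh⟩ := mul_ne_zero_iff.mp hp
  obtain ⟨hF, hH⟩ := mul_ne_zero_iff.mp hc
  simp only [hAC, hDC, hC, log_mul hf hh, log_mul hF hH, log_mul hf hH, log_mul hF hh]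
  ring

lemma condMI_pair_map_eq_zero_of_factorization (B : Ω →ₛ β) (g : δ → γ)
    (F : α → β → γ → ℝ) (G : β → δ → ℝ)
    (hfac : ∀ a, ∀ b ∈ B.range, ∀ d ∈ D.range,
      P.real {ω | A ω = a ∧ B ω = b ∧ D ω = d} = F a b (g d) * G b d) :
    condMI P A D (B.pair (D.map g)) = 0 := by
  refine condMI_eq_zero_of_factorization P A D _ (fun a c => F a c.1 c.2)
    (fun d c => if c.1 ∈ B.range ∧ d ∈ D.range ∧ g d = c.2 then G c.1 d else 0) ?_
  rintro a d ⟨b, c⟩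
  split_ifs with h
  · obtain ⟨hb, hd, rfl⟩ := h
    rw [← hfac a b hb d hd]
    congr 1
    ext ω
    simp only [Set.mem_preimage, SimpleFunc.pair_apply, SimpleFunc.map_apply,
      Set.mem_singleton_iff, Prod.mk.injEq, Set.mem_ofPred_eq]
    constructor
    · rintro ⟨ha, hd, hb, -⟩
      exact ⟨ha, hb, hd⟩
    · rintro ⟨ha, hb, hd⟩
      exact ⟨ha, hd, hb, hd ▸ rfl⟩
  · have hempty : A.pair (D.pair (B.pair (D.map g))) ⁻¹' {(a, d, b, c)} = ∅ := by
      refine Set.eq_empty_of_forall_notMem fun ω hω => h ?_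
      simp only [Set.mem_preimage, SimpleFunc.pair_apply, SimpleFunc.map_apply,
        Set.mem_singleton_iff, Prod.mk.injEq] at hω
      obtain ⟨-, rfl, rfl, rfl⟩ := hω
      exact ⟨B.mem_range_self ω, D.mem_range_self ω, rfl⟩
    simp [hempty]

end FiniteMeasure

section ProbabilityMeasure

variable [IsProbabilityMeasure P] (A : Ω →ₛ α) (D : Ω →ₛ δ) (C : Ω →ₛ γ)

lemma sum_measureReal_preimage_eq_one (f : Ω →ₛ α) {R : Finset α} (hR : f.range ⊆ R) :
    ∑ a ∈ R, P.real (f ⁻¹' {a}) = 1 := by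
  simpa using (measureReal_preimage_eq_sum P f hR Set.univ).symm

lemma condMI_nonneg : 0 ≤ condMI P A D C := by
  set T := A.pair (D.pair C)
  have hq : ∑ t ∈ A.range ×ˢ D.range ×ˢ C.range, P.real (A.pair C ⁻¹' {(t.1, t.2.2)})
      * P.real (D.pair C ⁻¹' {t.2}) / P.real (C ⁻¹' {t.2.2}) = 1 := calc
    _ = ∑ c ∈ C.range, (∑ a ∈ A.range, P.real (A.pair C ⁻¹' {(a, c)}))
          * (∑ d ∈ D.range, P.real (D.pair C ⁻¹' {(d, c)})) / P.real (C ⁻¹' {c}) := by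
      simp only [Finset.sum_product, Finset.sum_mul_sum, Finset.sum_div]
      exact (Finset.sum_congr rfl fun a _ => Finset.sum_comm).trans Finset.sum_comm
    _ = ∑ c ∈ C.range, P.real (C ⁻¹' {c}) := by
      simp only [← measureReal_eq_sum_pair, mul_self_div_self]
    _ = 1 := sum_measureReal_preimage_eq_one P C subset_rfl
  have hsub : ∀ t : α × δ × γ, T ⁻¹' {t} ⊆ A.pair C ⁻¹' {(t.1, t.2.2)}
      ∧ T ⁻¹' {t} ⊆ D.pair C ⁻¹' {t.2} ∧ T ⁻¹' {t} ⊆ C ⁻¹' {t.2.2} := fun t => by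
    refine ⟨fun ω h => ?_, fun ω h => ?_, fun ω h => ?_⟩ <;>
      simp_all [T, Prod.ext_iff]
  have hR : T.range ⊆ A.range ×ˢ D.range ×ˢ C.range :=
    (SimpleFunc.range_pair_subset _ _).trans
      (Finset.product_subset_product subset_rfl (SimpleFunc.range_pair_subset _ _))
  rw [condMI_eq_sum]
  calc
    (0 : ℝ) = ∑ t ∈ A.range ×ˢ D.range ×ˢ C.range, (P.real (T ⁻¹' {t})
        - P.real (A.pair C ⁻¹' {(t.1, t.2.2)}) * P.real (D.pair C ⁻¹' {t.2})
          / P.real (C ⁻¹' {t.2.2})) := by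
      rw [Finset.sum_sub_distrib, hq, sum_measureReal_preimage_eq_one P T hR, sub_self]
    _ ≤ _ := Finset.sum_le_sum fun t _ => sub_div_le_mul_log measureReal_nonneg
      (measureReal_mono (hsub t).1) (measureReal_mono (hsub t).2.1) (measureReal_mono (hsub t).2.2)

/-- Both sides are read off the chain rule for `I(A; B, D | g D)`, expanded as
`I(A; D | g D) + I(A; B | D)` and as `I(A; B | g D) + I(A; D | B, g D)`. -/
lemma condMI_le_condMI_map (B : Ω →ₛ β) (g : δ → γ)
    (h : condMI P A D (B.pair (D.map g)) = 0) :
    condMI P A B D ≤ condMI P A B (D.map g) := by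
  have hnonneg := condMI_nonneg P A D (D.map g)
  have e1 : entropy P (fun ω => (D ω, D.map g ω)) = entropy P D :=
    entropy_comp_of_injective P D (f := fun d => (d, g d)) fun _ _ h => (Prod.mk.inj h).1
  have e2 : entropy P (fun ω => (A ω, D ω, D.map g ω)) = entropy P (fun ω => (A ω, D ω)) :=
    entropy_comp_of_injective P (fun ω => (A ω, D ω)) (f := fun p : α × δ => (p.1, p.2, g p.2))
      fun _ _ h => by simp_all [Prod.ext_iff]
  have e3 : entropy P (fun ω => (D ω, B.pair (D.map g) ω)) = entropy P (fun ω => (B ω, D ω)) :=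
    entropy_comp_of_injective P (fun ω => (B ω, D ω)) (f := fun p : β × δ => (p.2, p.1, g p.2))
      fun _ _ h => by simp_all [Prod.ext_iff]
  have e4 : entropy P (fun ω => (A ω, D ω, B.pair (D.map g) ω))
      = entropy P (fun ω => (A ω, B ω, D ω)) :=
    entropy_comp_of_injective P (fun ω => (A ω, B ω, D ω))
      (f := fun p : α × β × δ => (p.1, p.2.2, p.2.1, g p.2.2))
      fun _ _ h => by simp_all [Prod.ext_iff]
  have e5 : entropy P (fun ω => (A ω, B.pair (D.map g) ω))
      = entropy P (fun ω => (A ω, B ω, D.map g ω)) := rfl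
  have e6 : entropy P (B.pair (D.map g)) = entropy P (fun ω => (B ω, D.map g ω)) := rfl
  rw [condMI, e1, e2] at hnonneg
  rw [condMI, e3, e4, e5, e6] at h
  rw [condMI, condMI]
  linarith

end ProbabilityMeasure

end ConditionalMutualInformation

section Graph

variable {V : Type*} {E : Set (V × V)}

def edgesIn (E : Set (V × V)) (B : Finset V) : Finset (V × V) := {e ∈ B ×ˢ B | e ∈ E}

lemma mem_edgesIn {B : Finset V} {e : V × V} :
    e ∈ edgesIn E B ↔ e ∈ E ∧ e.1 ∈ B ∧ e.2 ∈ B := by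
  simp [edgesIn, and_comm]

lemma edgesIn_mono {S B : Finset V} (h : S ⊆ B) : edgesIn E S ⊆ edgesIn E B := fun _ he => by
  obtain ⟨hE, h1, h2⟩ := mem_edgesIn.mp he
  exact mem_edgesIn.mpr ⟨hE, h h1, h h2⟩

def innerBoundary (E : Set (V × V)) (S : Finset V) : Finset V :=
  {v ∈ S | v ∈ vBoundary (graphOf E) ↑S}

lemma coe_innerBoundary (E : Set (V × V)) (S : Finset V) :
    (innerBoundary E S : Set V) = vBoundary (graphOf E) ↑S := by
  ext v
  simpa [innerBoundary] using fun h => h.1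

lemma innerBoundary_subset (E : Set (V × V)) (S : Finset V) : innerBoundary E S ⊆ S :=
  Finset.filter_subset _ _
lemma endpoints_mem_of_mem_edgesIn_sdiff {S R : Finset V} {e : V × V}
    (he : e ∈ edgesIn E (S ∪ R) \ edgesIn E S) :
    e.1 ∈ innerBoundary E S ∪ R ∧ e.2 ∈ innerBoundary E S ∪ R := by
  obtain ⟨heB, heS⟩ := Finset.mem_sdiff.mp he
  obtain ⟨hE, h1, h2⟩ := mem_edgesIn.mp heB
  have hcross : e.1 ∈ S → e.2 ∈ S → False := fun h1S h2S => heS (mem_edgesIn.mpr ⟨hE, h1S, h2S⟩)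
  have hbd : ∀ w ∈ S ∪ R, ∀ w', w' ∉ S → (graphOf E).Adj w w' → w ∈ innerBoundary E S ∪ R := by
    intro w hw w' hw' hadj
    by_cases hwS : w ∈ S
    · exact Finset.mem_union_left _ (Finset.mem_filter.mpr ⟨hwS, hwS, w', hw', hadj⟩)
    · exact Finset.mem_union_right _ ((Finset.mem_union.mp hw).resolve_left hwS)
  have hadj : e.1 ≠ e.2 → (graphOf E).Adj e.1 e.2 := fun hne =>
    (SimpleGraph.fromRel_adj _ _ _).mpr ⟨hne, Or.inl hE⟩
  by_cases h1S : e.1 ∈ S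
  · have h2S : e.2 ∉ S := fun h => hcross h1S h
    have hne : e.1 ≠ e.2 := fun h => h2S (h ▸ h1S)
    exact ⟨hbd _ h1 _ h2S (hadj hne),
      Finset.mem_union_right _ ((Finset.mem_union.mp h2).resolve_left h2S)⟩
  · refine ⟨Finset.mem_union_right _ ((Finset.mem_union.mp h1).resolve_left h1S), ?_⟩
    by_cases h2S : e.2 ∈ S
    · exact hbd _ h2 _ h1S (hadj fun h => h1S (h ▸ h2S)).symm
    · exact Finset.mem_union_right _ ((Finset.mem_union.mp h2).resolve_left h2S)

end Graph

section FactorWeight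

variable {V X : Type*}

def factorWeight (φ : V → X → ℝ) (ψ : V × V → X → X → ℝ) (Vs : Finset V) (Es : Finset (V × V))
    (τ : V → X) : ℝ :=
  (∏ v ∈ Vs, φ v (τ v)) * ∏ e ∈ Es, ψ e (τ e.1) (τ e.2)

variable {φ φ' : V → X → ℝ} {ψ ψ' : V × V → X → X → ℝ}

lemma factorWeight_congr {Vs : Finset V} {Es : Finset (V × V)} {τ τ' : V → X}
    (hφ : ∀ v ∈ Vs, φ v (τ v) = φ' v (τ' v))
    (hψ : ∀ e ∈ Es, ψ e (τ e.1) (τ e.2) = ψ' e (τ' e.1) (τ' e.2)) :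
    factorWeight φ ψ Vs Es τ = factorWeight φ' ψ' Vs Es τ' := by
  rw [factorWeight, factorWeight, Finset.prod_congr rfl hφ, Finset.prod_congr rfl hψ]

lemma factorWeight_union {E : Set (V × V)} {S R : Finset V} (hSR : Disjoint S R) (τ : V → X) :
    factorWeight φ ψ (S ∪ R) (edgesIn E (S ∪ R)) τ
      = factorWeight φ ψ S (edgesIn E S) τ
        * factorWeight φ ψ R (edgesIn E (S ∪ R) \ edgesIn E S) τ := by
  rw [factorWeight, factorWeight, factorWeight, Finset.prod_union hSR,
    ← Finset.prod_sdiff (edgesIn_mono (Finset.subset_union_left (s₂ := R)))]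
  ring

variable [Nonempty X]

def extendArb (s : Finset V) (σ : s → X) : V → X :=
  fun v => if h : v ∈ s then σ ⟨v, h⟩ else Classical.arbitrary X

lemma extendArb_of_mem {s : Finset V} (σ : s → X) {v : V} (hv : v ∈ s) :
    extendArb s σ v = σ ⟨v, hv⟩ :=
  dif_pos hv

lemma extendArb_piFinsetUnion {S R : Finset V} (hSR : Disjoint S R) (σ₁ : S → X) (σ₂ : R → X) :
    extendArb (S ∪ R) (Equiv.piFinsetUnion (fun _ => X) hSR (σ₁, σ₂))
      = S.piecewise (extendArb S σ₁) (extendArb R σ₂) := by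
  funext v
  by_cases hS : v ∈ S
  · rw [Finset.piecewise_eq_of_mem _ _ _ hS, extendArb_of_mem _ (Finset.mem_union_left R hS),
      extendArb_of_mem _ hS, Equiv.piFinsetUnion_left]
  · rw [Finset.piecewise_eq_of_notMem _ _ _ hS]
    by_cases hR : v ∈ R
    · rw [extendArb_of_mem _ (Finset.mem_union_right S hR), extendArb_of_mem _ hR,
        Equiv.piFinsetUnion_right]
    · have : v ∉ S ∪ R := by simp [hS, hR]
      simp only [extendArb, dif_neg this, dif_neg hR]

variable [Fintype X]

lemma sum_extendArb_union {S R : Finset V} (hSR : Disjoint S R) (f : (V → X) → ℝ) :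
    ∑ σ : (S ∪ R : Finset V) → X, f (extendArb _ σ)
      = ∑ σ₁ : S → X, ∑ σ₂ : R → X, f (S.piecewise (extendArb S σ₁) (extendArb R σ₂)) := by
  rw [← (Equiv.piFinsetUnion (fun _ => X) hSR).sum_comp, Fintype.sum_prod_type]
  simp only [extendArb_piFinsetUnion]

/-- The Markov property of the factor weights: edges leaving `S` start on `innerBoundary E S`,
where `c` pins the configuration to `β`. -/
theorem sum_factorWeight_union {E : Set (V × V)} {S R : Finset V} (hSR : Disjoint S R)
    (c : (V → X) → Prop) [DecidablePred c] (hc : ∀ τ τ', (∀ v ∈ S, τ v = τ' v) → (c τ ↔ c τ'))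
    (β : V → X) (hcβ : ∀ τ, c τ → ∀ v ∈ innerBoundary E S, τ v = β v) :
    ∑ σ : (S ∪ R : Finset V) → X, (if c (extendArb _ σ)
        then factorWeight φ ψ (S ∪ R) (edgesIn E (S ∪ R)) (extendArb _ σ) else 0)
      = (∑ σ₁ : S → X, if c (extendArb S σ₁)
          then factorWeight φ ψ S (edgesIn E S) (extendArb S σ₁) else 0)
        * ∑ σ₂ : R → X, factorWeight φ ψ R (edgesIn E (S ∪ R) \ edgesIn E S)
            (S.piecewise β (extendArb R σ₂)) := by
  rw [sum_extendArb_union hSR fun τ => if c τ then factorWeight φ ψ (S ∪ R) (edgesIn E (S ∪ R)) τ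
    else 0, Finset.sum_mul_sum]
  refine Finset.sum_congr rfl fun σ₁ _ => Finset.sum_congr rfl fun σ₂ _ => ?_
  set τ₁ := extendArb S σ₁
  set τ₂ := extendArb R σ₂
  have hS : ∀ v ∈ S, S.piecewise τ₁ τ₂ v = τ₁ v := fun v hv => Finset.piecewise_eq_of_mem _ _ _ hv
  rw [if_congr (hc _ _ hS) rfl rfl]
  split_ifs with hτ₁
  · have hR : ∀ v ∈ innerBoundary E S ∪ R, S.piecewise τ₁ τ₂ v = S.piecewise β τ₂ v := by
      intro v hv
      by_cases hvS : v ∈ S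
      · simp only [Finset.piecewise_eq_of_mem _ _ _ hvS]
        exact hcβ τ₁ hτ₁ v ((Finset.mem_union.mp hv).resolve_right
          (Finset.disjoint_left.mp hSR hvS))
      · simp only [Finset.piecewise_eq_of_notMem _ _ _ hvS]
    rw [factorWeight_union hSR]
    congr 1
    · refine factorWeight_congr (fun v hv => by rw [hS v hv]) fun e he => ?_
      obtain ⟨-, h1, h2⟩ := mem_edgesIn.mp he
      rw [hS _ h1, hS _ h2]
    · refine factorWeight_congr (fun v hv => by rw [hR v (Finset.mem_union_right _ hv)])
        fun e he => ?_
      obtain ⟨h1, h2⟩ := endpoints_mem_of_mem_edgesIn_sdiff he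
      rw [hR _ h1, hR _ h2]
  · rw [zero_mul]

end FactorWeight

section ObservationData

variable {X Y' V : Type*}

/-- The probability of the side information `z` on a vertex with label `x`: the label is
revealed with probability `ε` and hidden with probability `1 - ε`. -/
def sideWeight (ε : ℝ) : Option X → X → ℝ
  | none, _ => 1 - ε
  | some x', x => if x' = x then ε else 0

lemma prod_sideWeight (ε : ℝ) {B : Finset V} {τ : V → X} {z : V → Option X}
    (hz : ∀ v ∈ B, ∀ x, z v = some x → x = τ v) :
    ∏ v ∈ B, sideWeight ε (z v) (τ v)
      = ε ^ (B.filter fun v => (z v).isSome).card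
        * (1 - ε) ^ (B \ B.filter fun v => (z v).isSome).card := by
  rw [← Finset.prod_filter_mul_prod_filter_not B fun v => (z v).isSome, Finset.filter_not]
  congr 1
  · refine (Finset.prod_congr rfl fun v hv => ?_).trans (Finset.prod_const ε)
    obtain ⟨hvB, hzv⟩ := Finset.mem_filter.mp hv
    obtain ⟨x, hx⟩ := Option.isSome_iff_exists.mp hzv
    simp [hx, sideWeight, hz v hvB x hx]
  · refine (Finset.prod_congr rfl fun v hv => ?_).trans (Finset.prod_const (1 - ε))
    obtain ⟨hvB, hvT⟩ := Finset.mem_sdiff.mp hv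
    have hzv : z v = none := by simpa [hvB] using hvT
    simp [hzv, sideWeight]

abbrev ObsData (X Y' V : Type*) := (V × V → Option Y') × (V → Option (Option X))

/-- Coordinates absent from `d` contribute the neutral factor `1`. -/
def vertexFactor (ε : ℝ) (d : ObsData X Y' V) (v : V) (x : X) : ℝ :=
  (d.2 v).elim 1 fun z => sideWeight ε z x

def edgeFactor (Q : X → X → Y' → ℝ) (d : ObsData X Y' V) (e : V × V) (x x' : X) : ℝ :=
  (d.1 e).elim 1 (Q x x')

def restrictObs (E : Set (V × V)) (S : Finset V) (d : ObsData X Y' V) : ObsData X Y' V :=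
  (fun e => if e ∈ edgesIn E S then d.1 e else none, fun v => if v ∈ S then d.2 v else none)

variable [Fintype X] [Nonempty X]

def innerFactor (ε : ℝ) (Q : X → X → Y' → ℝ) (E : Set (V × V)) (S : Finset V) (u : V) (a : X)
    (b : V → Option X) (d : ObsData X Y' V) : ℝ :=
  ∑ σ : S → X, if extendArb S σ u = a ∧ ∀ v ∈ innerBoundary E S, b v = some (extendArb S σ v)
    then factorWeight (vertexFactor ε d) (edgeFactor Q d) S (edgesIn E S) (extendArb S σ) else 0

def outerFactor (ε : ℝ) (Q : X → X → Y' → ℝ) (E : Set (V × V)) (S R : Finset V)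
    (b : V → Option X) (d : ObsData X Y' V) : ℝ :=
  ((Fintype.card X : ℝ)⁻¹) ^ (S ∪ R).card * ∑ σ : R → X,
    factorWeight (vertexFactor ε d) (edgeFactor Q d) R (edgesIn E (S ∪ R) \ edgesIn E S)
      (S.piecewise (fun v => (b v).getD (Classical.arbitrary X)) (extendArb R σ))

lemma innerFactor_restrictObs (ε : ℝ) (Q : X → X → Y' → ℝ) (E : Set (V × V)) (S : Finset V)
    (u : V) (a : X) (b : V → Option X) (d : ObsData X Y' V) :
    innerFactor ε Q E S u a b (restrictObs E S d) = innerFactor ε Q E S u a b d := by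
  refine Finset.sum_congr rfl fun σ _ => if_congr Iff.rfl ?_ rfl
  refine factorWeight_congr (fun v hv => ?_) fun e he => ?_
  · simp [vertexFactor, restrictObs, hv]
  · simp [edgeFactor, restrictObs, he]

end ObservationData

namespace Model

variable {X Y' V : Type*} [Fintype X] [Fintype Y'] {Q : X → X → Y' → ℝ} {E : Set (V × V)}
  (M : Model X Y' Q E)

lemma measurableSet_θ_eq (v : V) (x : X) : MeasurableSet {ω | M.θ v ω = x} :=
  M.measθ v (show MeasurableSet[⊤] {x} from trivial)

lemma measurableSet_Yobs_eq (e : V × V) (y : Y') : MeasurableSet {ω | M.Yobs e ω = y} :=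
  M.measY e (show MeasurableSet[⊤] {y} from trivial)

lemma measurableSet_U_le (v : V) (ε : ℝ) : MeasurableSet {ω | M.U v ω ≤ ε} :=
  M.measU v measurableSet_Iic

lemma measurableSet_ξ_eq (ε : ℝ) (v : V) (z : Option X) : MeasurableSet {ω | M.ξ ε v ω = z} := by
  have hU := M.measurableSet_U_le v ε
  rcases z with _ | x
  · convert hU.compl using 1
    ext ω
    by_cases h : M.U v ω ≤ ε
    · simp [ξ, h]
    · simp [ξ, h, not_le.mp h]
  · convert hU.inter (M.measurableSet_θ_eq v x) using 1
    ext ω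
    by_cases h : M.U v ω ≤ ε <;> simp [ξ, h]

def thetaSF (u : V) : M.Ω →ₛ X := ⟨M.θ u, M.measurableSet_θ_eq u, Set.toFinite _⟩

def labelsSF (W : Finset V) : M.Ω →ₛ (W → X) where
  toFun ω v := M.θ v ω
  measurableSet_fiber' σ := by
    convert MeasurableSet.iInter fun v : W => M.measurableSet_θ_eq v (σ v) using 1
    ext ω
    simp [funext_iff]
  finite_range' := Set.toFinite _

def thetaOnSF (W : Finset V) : M.Ω →ₛ (V → Option X) :=
  (M.labelsSF W).map fun σ v => if h : v ∈ W then some (σ ⟨v, h⟩) else none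

lemma coe_thetaOnSF (W : Finset V) : ⇑(M.thetaOnSF W) = M.thetaOn ↑W := by
  funext ω v
  by_cases h : v ∈ W <;> simp [thetaOnSF, labelsSF, thetaOn, h]

def obsVecSF (ε : ℝ) (B : Finset V) : M.Ω →ₛ ((edgesIn E B → Y') × (B → Option X)) where
  toFun ω := (fun e => M.Yobs e ω, fun v => M.ξ ε v ω)
  measurableSet_fiber' κ := by
    convert (MeasurableSet.iInter fun e : edgesIn E B => M.measurableSet_Yobs_eq e (κ.1 e)).inter
      (MeasurableSet.iInter fun v : B => M.measurableSet_ξ_eq ε v (κ.2 v)) using 1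
    ext ω
    simp [funext_iff, Prod.ext_iff]
  finite_range' := Set.toFinite _

def obsSF (ε : ℝ) (B : Finset V) : M.Ω →ₛ ObsData X Y' V :=
  (M.obsVecSF ε B).map fun κ =>
    (fun e => if h : e ∈ edgesIn E B then some (κ.1 ⟨e, h⟩) else none,
     fun v => if h : v ∈ B then some (κ.2 ⟨v, h⟩) else none)

lemma coe_obsSF (ε : ℝ) (B : Finset V) : ⇑(M.obsSF ε B) = M.obsRV ε ↑B := by
  funext ω
  refine Prod.ext (funext fun e => ?_) (funext fun v => ?_)
  · by_cases h : e ∈ edgesIn E B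
    · have h' := mem_edgesIn.mp h
      simp [obsSF, obsVecSF, obsRV, h, h']
    · have h' : ¬ (e ∈ E ∧ e.1 ∈ B ∧ e.2 ∈ B) := fun h' => h (mem_edgesIn.mpr h')
      simp [obsSF, obsVecSF, obsRV, h, h']
  · by_cases h : v ∈ B <;> simp [obsSF, obsVecSF, obsRV, h]

lemma thetaOn_eq_thetaOn_iff {W : Set V} {ω ω' : M.Ω} :
    M.thetaOn W ω = M.thetaOn W ω' ↔ ∀ v ∈ W, M.θ v ω = M.θ v ω' := by
  simp only [thetaOn, funext_iff]
  refine forall_congr' fun v => ?_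
  by_cases h : v ∈ W <;> simp [h]

lemma obsRV_eq_obsRV_iff (ε : ℝ) (B : Finset V) {ω ω' : M.Ω} :
    M.obsRV ε ↑B ω = M.obsRV ε ↑B ω'
      ↔ (∀ e ∈ edgesIn E B, M.Yobs e ω = M.Yobs e ω') ∧ ∀ v ∈ B, M.ξ ε v ω = M.ξ ε v ω' := by
  simp only [obsRV, Prod.mk.injEq, funext_iff]
  refine and_congr (forall_congr' fun e => ?_) (forall_congr' fun v => ?_)
  · by_cases h : e ∈ E ∧ e.1 ∈ B ∧ e.2 ∈ B
    · simp [h, mem_edgesIn.mpr h]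
    · simp only [Finset.mem_coe, h, if_false, true_iff]
      exact fun he => absurd (mem_edgesIn.mp he) h
  · by_cases h : v ∈ B <;> simp [h]

def pinned (W : Finset V) (τ : V → X) (F : Finset (V × V)) (y : V × V → Y') : Set M.Ω :=
  {ω | (∀ v ∈ W, M.θ v ω = τ v) ∧ ∀ e ∈ F, M.Yobs e ω = y e}

lemma measurableSet_pinned (W : Finset V) (τ : V → X) (F : Finset (V × V)) (y : V × V → Y') :
    MeasurableSet (M.pinned W τ F y) := by
  convert (W.measurableSet_biInter fun v _ => M.measurableSet_θ_eq v (τ v)).inter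
    (F.measurableSet_biInter fun e _ => M.measurableSet_Yobs_eq e (y e)) using 1
  ext ω
  simp [pinned]

lemma measurableSet_forall_U_le (T : Finset V) (ε : ℝ) :
    MeasurableSet {ω | ∀ v ∈ T, M.U v ω ≤ ε} := by
  convert T.measurableSet_biInter fun v _ => M.measurableSet_U_le v ε using 1
  ext ω
  simp

lemma measurableSet_forall_lt_U (T : Finset V) (ε : ℝ) :
    MeasurableSet {ω | ∀ v ∈ T, ε < M.U v ω} := by
  convert T.measurableSet_biInter fun v _ =>
    measurableSet_lt (measurable_const (a := ε)) (M.measU v) using 1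
  ext ω
  simp

/-- Inclusion–exclusion on the events `ε < U v`, one vertex of `T₂` at a time, from `lawU`. -/
lemma measureReal_pinned_inter_U {ε : ℝ} (hε : ε ∈ Set.Icc (0 : ℝ) 1) (W : Finset V)
    (τ : V → X) (F : Finset (V × V)) (y : V × V → Y') {T₁ T₂ : Finset V} (hT : Disjoint T₁ T₂) :
    M.P.real (M.pinned W τ F y ∩ {ω | ∀ v ∈ T₁, M.U v ω ≤ ε} ∩ {ω | ∀ v ∈ T₂, ε < M.U v ω})
      = ε ^ T₁.card * (1 - ε) ^ T₂.card * M.P.real (M.pinned W τ F y) := by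
  have := M.probP
  induction T₂ using Finset.induction_on generalizing T₁ with
  | empty =>
    have hlaw := M.lawU T₁ (fun _ => ε) (fun _ => hε) W F τ y
    simp only [Finset.prod_const] at hlaw
    rw [← measureReal_def, ← measureReal_def] at hlaw
    simp only [pinned, Finset.notMem_empty, false_implies, implies_true, Set.ofPred_true,
      Set.inter_univ, Finset.card_empty, pow_zero, mul_one]
    rw [← hlaw]
    congr 1
    ext ω
    simp [and_comm]
  | @insert w T₂ hw ih =>
    obtain ⟨hwT₁, hdisj⟩ := Finset.disjoint_insert_right.mp hT
    set A := M.pinned W τ F y ∩ {ω | ∀ v ∈ T₁, M.U v ω ≤ ε} ∩ {ω | ∀ v ∈ T₂, ε < M.U v ω}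
    have hsplit : M.pinned W τ F y ∩ {ω | ∀ v ∈ T₁, M.U v ω ≤ ε}
        ∩ {ω | ∀ v ∈ insert w T₂, ε < M.U v ω}
        = A \ (M.pinned W τ F y ∩ {ω | ∀ v ∈ insert w T₁, M.U v ω ≤ ε}
          ∩ {ω | ∀ v ∈ T₂, ε < M.U v ω}) := by
      ext ω
      simp only [A, Set.mem_inter_iff, Set.mem_sdiff, Set.mem_ofPred_eq, Finset.forall_mem_insert,
        ← not_le]
      tauto
    have hsub : M.pinned W τ F y ∩ {ω | ∀ v ∈ insert w T₁, M.U v ω ≤ ε}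
        ∩ {ω | ∀ v ∈ T₂, ε < M.U v ω} ⊆ A := fun ω ⟨⟨hp, h₁⟩, h₂⟩ =>
      ⟨⟨hp, fun v hv => h₁ v (Finset.mem_insert_of_mem hv)⟩, h₂⟩
    rw [hsplit, measureReal_sdiff hsub (((M.measurableSet_pinned W τ F y).inter
        (M.measurableSet_forall_U_le _ ε)).inter (M.measurableSet_forall_lt_U T₂ ε)),
      ih hdisj, ih (Finset.disjoint_insert_left.mpr ⟨hw, hdisj⟩),
      Finset.card_insert_of_notMem hwT₁, Finset.card_insert_of_notMem hw]
    ring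

lemma pinned_inter_ξ_eq {ε : ℝ} {B : Finset V} {τ : V → X} {z : V → Option X}
    (hz : ∀ v ∈ B, ∀ x, z v = some x → x = τ v) (F : Finset (V × V)) (y : V × V → Y') :
    M.pinned B τ F y ∩ {ω | ∀ v ∈ B, M.ξ ε v ω = z v}
      = M.pinned B τ F y ∩ {ω | ∀ v ∈ B.filter fun v => (z v).isSome, M.U v ω ≤ ε}
        ∩ {ω | ∀ v ∈ B \ B.filter fun v => (z v).isSome, ε < M.U v ω} := by
  ext ω
  simp only [Set.mem_inter_iff, Set.mem_ofPred_eq, pinned, and_assoc]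
  refine and_congr_right fun hθ => and_congr_right fun _ => ?_
  refine ⟨fun hξ => ⟨fun v hv => ?_, fun v hv => ?_⟩, fun ⟨hle, hlt⟩ v hv => ?_⟩
  · obtain ⟨hvB, hzv⟩ := Finset.mem_filter.mp hv
    by_contra h
    simp [← hξ v hvB, ξ, h] at hzv
  · obtain ⟨hvB, hvT⟩ := Finset.mem_sdiff.mp hv
    have hzv : z v = none := by simpa [hvB] using hvT
    by_contra h
    simpa [ξ, not_lt.mp h] using (hξ v hvB).trans hzv
  · rcases hzv : z v with _ | x
    · simp [ξ, not_le.mpr (hlt v (Finset.mem_sdiff.mpr ⟨hv, by simp [hzv]⟩))]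
    · simp [ξ, hle v (Finset.mem_filter.mpr ⟨hv, by simp [hzv]⟩), hθ v hv, hz v hv x hzv]

lemma measureReal_pinned_inter_ξ_eq_factorWeight {ε : ℝ} (hε : ε ∈ Set.Icc (0 : ℝ) 1)
    (B : Finset V) (τ : V → X) (y : V × V → Y') (z : V → Option X) :
    M.P.real (M.pinned B τ (edgesIn E B) y ∩ {ω | ∀ v ∈ B, M.ξ ε v ω = z v})
      = ((Fintype.card X : ℝ)⁻¹) ^ B.card * factorWeight (fun v => sideWeight ε (z v))
          (fun e x x' => Q x x' (y e)) B (edgesIn E B) τ := by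
  by_cases hz : ∀ v ∈ B, ∀ x, z v = some x → x = τ v
  · have hlaw := M.lawθY B (edgesIn E B) (fun e he => mem_edgesIn.mp he) τ y
    rw [← measureReal_def] at hlaw
    rw [M.pinned_inter_ξ_eq hz, M.measureReal_pinned_inter_U hε B τ _ y Finset.disjoint_sdiff,
      pinned, hlaw, factorWeight, prod_sideWeight ε hz]
    ring
  · push Not at hz
    obtain ⟨v, hv, x, hzv, hx⟩ := hz
    have hempty : M.pinned B τ (edgesIn E B) y ∩ {ω | ∀ v ∈ B, M.ξ ε v ω = z v} = ∅ := by
      refine Set.eq_empty_of_forall_notMem fun ω ⟨⟨hθ, _⟩, hξ⟩ => hx ?_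
      have := (hξ v hv).trans hzv
      by_cases h : M.U v ω ≤ ε <;> simp_all [ξ]
    rw [hempty, measureReal_empty, factorWeight,
      Finset.prod_eq_zero hv (by simp [hzv, sideWeight, hx])]
    ring

lemma restrictObs_obsRV (ε : ℝ) {S B : Finset V} (hSB : S ⊆ B) (ω : M.Ω) :
    restrictObs E S (M.obsRV ε ↑B ω) = M.obsRV ε ↑S ω := by
  refine Prod.ext (funext fun e => ?_) (funext fun v => ?_)
  · by_cases h : e ∈ edgesIn E S
    · obtain ⟨hE, h1, h2⟩ := mem_edgesIn.mp h
      simp [restrictObs, obsRV, h, hE, h1, h2, hSB h1, hSB h2]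
    · have h' : ¬ (e ∈ E ∧ e.1 ∈ S ∧ e.2 ∈ S) := fun h' => h (mem_edgesIn.mpr h')
      simp only [restrictObs, obsRV, h, if_false, Finset.mem_coe, h']
  · by_cases h : v ∈ S
    · simp [restrictObs, obsRV, h, hSB h]
    · simp [restrictObs, obsRV, h]

lemma measureReal_θ_obsRV_eq_factorWeight {ε : ℝ} (hε : ε ∈ Set.Icc (0 : ℝ) 1) (B : Finset V)
    (τ : V → X) (ω₀ : M.Ω) :
    M.P.real {ω | (∀ v ∈ B, M.θ v ω = τ v) ∧ M.obsRV ε ↑B ω = M.obsRV ε ↑B ω₀}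
      = ((Fintype.card X : ℝ)⁻¹) ^ B.card * factorWeight (vertexFactor ε (M.obsRV ε ↑B ω₀))
          (edgeFactor Q (M.obsRV ε ↑B ω₀)) B (edgesIn E B) τ := by
  have hset : {ω | (∀ v ∈ B, M.θ v ω = τ v) ∧ M.obsRV ε ↑B ω = M.obsRV ε ↑B ω₀}
      = M.pinned B τ (edgesIn E B) (M.Yobs · ω₀) ∩ {ω | ∀ v ∈ B, M.ξ ε v ω = M.ξ ε v ω₀} := by
    ext ω
    simp only [Set.mem_ofPred_eq, obsRV_eq_obsRV_iff, pinned, Set.mem_inter_iff, and_assoc]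
  rw [hset, measureReal_pinned_inter_ξ_eq_factorWeight M hε]
  congr 1
  refine factorWeight_congr (fun v hv => ?_) fun e he => ?_
  · simp [vertexFactor, obsRV, hv]
  · simp [edgeFactor, obsRV, mem_edgesIn.mp he]

variable [Nonempty X]

lemma inter_labelsSF_preimage_eq_ite (ε : ℝ) (B W : Finset V) (hW : W ⊆ B) (u : V) (hu : u ∈ B)
    (a : X) (ω₁ ω₀ : M.Ω) (σ : B → X) :
    {ω | M.θ u ω = a ∧ M.thetaOn ↑W ω = M.thetaOn ↑W ω₁ ∧ M.obsRV ε ↑B ω = M.obsRV ε ↑B ω₀}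
        ∩ M.labelsSF B ⁻¹' {σ}
      = if extendArb B σ u = a ∧ ∀ v ∈ W, M.thetaOn ↑W ω₁ v = some (extendArb B σ v)
        then {ω | (∀ v ∈ B, M.θ v ω = extendArb B σ v) ∧ M.obsRV ε ↑B ω = M.obsRV ε ↑B ω₀}
        else ∅ := by
  have hlabels : ∀ ω, M.labelsSF B ω = σ ↔ ∀ v ∈ B, M.θ v ω = extendArb B σ v := fun ω => by
    simp only [labelsSF, SimpleFunc.coe_mk, funext_iff, Subtype.forall]
    exact forall₂_congr fun v hv => by rw [extendArb_of_mem _ hv]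
  have hW₁ : ∀ v ∈ W, M.thetaOn ↑W ω₁ v = some (M.θ v ω₁) := fun v hv => by simp [thetaOn, hv]
  ext ω
  simp only [Set.mem_inter_iff, Set.mem_preimage, Set.mem_singleton_iff, hlabels,
    Set.mem_ofPred_eq, thetaOn_eq_thetaOn_iff]
  split_ifs with hc
  · refine ⟨fun ⟨⟨_, _, hobs⟩, hθ⟩ => ⟨hθ, hobs⟩, fun ⟨hθ, hobs⟩ =>
      ⟨⟨(hθ u hu).trans hc.1, fun v hv => ?_, hobs⟩, hθ⟩⟩
    rw [hθ v (hW hv), ← Option.some_inj, ← hc.2 v hv, hW₁ v hv]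
  · refine iff_of_false (fun ⟨⟨ha, hth, _⟩, hθ⟩ => hc ⟨(hθ u hu).symm.trans ha, fun v hv => ?_⟩)
      (Set.notMem_empty ω)
    rw [hW₁ v hv, ← hth v hv, hθ v (hW hv)]

theorem measureReal_θ_thetaOn_obsRV_eq_mul {ε : ℝ} (hε : ε ∈ Set.Icc (0 : ℝ) 1) {S R : Finset V}
    (hSR : Disjoint S R) {u : V} (hu : u ∈ S) (a : X) (ω₁ ω₀ : M.Ω) :
    M.P.real {ω | M.θ u ω = a
        ∧ M.thetaOn ↑(innerBoundary E S) ω = M.thetaOn ↑(innerBoundary E S) ω₁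
        ∧ M.obsRV ε ↑(S ∪ R) ω = M.obsRV ε ↑(S ∪ R) ω₀}
      = innerFactor ε Q E S u a (M.thetaOn ↑(innerBoundary E S) ω₁)
          (restrictObs E S (M.obsRV ε ↑(S ∪ R) ω₀))
        * outerFactor ε Q E S R (M.thetaOn ↑(innerBoundary E S) ω₁) (M.obsRV ε ↑(S ∪ R) ω₀) := by
  have := M.probP
  set b := M.thetaOn ↑(innerBoundary E S) ω₁
  set d := M.obsRV ε ↑(S ∪ R) ω₀
  set c : (V → X) → Prop := fun τ => τ u = a ∧ ∀ v ∈ innerBoundary E S, b v = some (τ v)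
  have hc : ∀ τ τ' : V → X, (∀ v ∈ S, τ v = τ' v) → (c τ ↔ c τ') := fun τ τ' h => by
    simp only [c, h u hu]
    exact and_congr_right' (forall₂_congr fun v hv => by rw [h v (innerBoundary_subset E S hv)])
  have hcβ : ∀ τ, c τ → ∀ v ∈ innerBoundary E S, τ v = (b v).getD (Classical.arbitrary X) :=
    fun τ hτ v hv => by simp [hτ.2 v hv]
  have hpart := measureReal_inter_preimage_eq_sum M.P (M.labelsSF (S ∪ R))
    (Finset.subset_univ _) {ω | M.θ u ω = a ∧ M.thetaOn ↑(innerBoundary E S) ω = b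
      ∧ M.obsRV ε ↑(S ∪ R) ω = d} Set.univ
  simp only [Set.preimage_univ, Set.inter_univ, Set.mem_univ, Finset.filter_true] at hpart
  rw [hpart, innerFactor_restrictObs]
  calc _ = ∑ σ : (S ∪ R : Finset V) → X, ((Fintype.card X : ℝ)⁻¹) ^ (S ∪ R).card
          * if c (extendArb _ σ) then factorWeight (vertexFactor ε d) (edgeFactor Q d) (S ∪ R)
              (edgesIn E (S ∪ R)) (extendArb _ σ) else 0 := by
        refine Finset.sum_congr rfl fun σ _ => ?_
        rw [inter_labelsSF_preimage_eq_ite M ε (S ∪ R) _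
          ((innerBoundary_subset E S).trans Finset.subset_union_left) u
          (Finset.mem_union_left R hu)]
        split_ifs
        · exact M.measureReal_θ_obsRV_eq_factorWeight hε (S ∪ R) _ ω₀
        · rw [measureReal_empty, mul_zero]
    _ = _ := by
        rw [← Finset.mul_sum, sum_factorWeight_union hSR c hc _ hcβ, innerFactor, outerFactor]
        ring

end Model

theorem statement_7_general
    {X Y' V : Type*} [Fintype X] [Fintype Y'] [Nonempty X]
    (Q : X → X → Y' → ℝ)
    (E : Set (V × V))
    (M : Model X Y' Q E)
    (S B : Finset V) (hSB : S ⊆ B) (u : V) (hu : u ∈ S) :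
    ∀ ε ∈ Set.Icc (0:ℝ) 1,
      condMI M.P (M.θ u) (M.thetaOn (vBoundary (graphOf E) ↑S)) (M.obsRV ε ↑B)
        ≤ condMI M.P (M.θ u) (M.thetaOn (vBoundary (graphOf E) ↑S)) (M.obsRV ε ↑S) := by
  intro ε hε
  have := M.probP
  obtain ⟨R, hSR, rfl⟩ : ∃ R, Disjoint S R ∧ B = S ∪ R :=
    ⟨B \ S, Finset.disjoint_sdiff, (Finset.union_sdiff_of_subset hSB).symm⟩
  have hobsS : M.obsRV ε ↑S = (M.obsSF ε (S ∪ R)).map (restrictObs E S) := by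
    funext ω
    rw [SimpleFunc.coe_map, M.coe_obsSF, Function.comp_apply,
      M.restrictObs_obsRV ε Finset.subset_union_left]
  rw [← coe_innerBoundary, ← M.coe_thetaOnSF, ← M.coe_obsSF ε (S ∪ R), hobsS]
  refine condMI_le_condMI_map M.P (M.thetaSF u) _ _ _ <|
    condMI_pair_map_eq_zero_of_factorization M.P _ _ _ _ (innerFactor ε Q E S u)
      (outerFactor ε Q E S R) ?_
  intro a b hb d hd
  obtain ⟨ω₁, rfl⟩ := SimpleFunc.mem_range.mp hb
  obtain ⟨ω₀, rfl⟩ := SimpleFunc.mem_range.mp hd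
  rw [M.coe_thetaOnSF, M.coe_obsSF]
  exact M.measureReal_θ_thetaOn_obsRV_eq_mul hε hSR hu a ω₁ ω₀

/-- Lemma: monotonicity of the conditional mutual information. Giving
more observations can only decrease the conditional mutual information between an
interior label and the boundary labels. -/
theorem statement_7
    {X Y' V : Type*} [Fintype X] [Fintype Y'] [Nonempty X]
    (hcard : 2 ≤ Fintype.card X)
    (Q : X → X → Y' → ℝ)
    (hQ0 : ∀ x1 x2 y, 0 ≤ Q x1 x2 y) (hQ1 : ∀ x1 x2, ∑ y, Q x1 x2 y = 1)
    (E : Set (V × V))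
    (hloop : ∀ e ∈ E, e.1 ≠ e.2)
    (hori : ∀ u v : V, (u, v) ∈ E → (v, u) ∉ E)
    (M : Model X Y' Q E)
    (hlf : LocallyFiniteGraph (graphOf E))
    (S B : Finset V) (hSB : S ⊆ B) (u : V) (hu : u ∈ S) :
    ∀ ε ∈ Set.Icc (0:ℝ) 1,
      condMI M.P (M.θ u) (M.thetaOn (vBoundary (graphOf E) ↑S)) (M.obsRV ε ↑B)
        ≤ condMI M.P (M.θ u) (M.thetaOn (vBoundary (graphOf E) ↑S)) (M.obsRV ε ↑S) :=
  statement_7_general Q E M S B hSB u hu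
end
end

section
/- Let (Ω,ℱ,P) be a probability space, let θ be uniformly distributed on ℤ_q, let 𝒢 ⊆ ℱ be a σ-algebra, and set μ(z) = P(θ = z | 𝒢) for z ∈ ℤ_q, δ(z) := μ(z) − 1/q, and X̄ := E[δ(θ)]. Then ∑_{y ∈ ℤ_q} ( E[ δ(y + θ) ] )² ≤ q · X̄². -/
/-!
Write `μ_ω = (μ(z)(ω))_z` for the posterior vector and `A_v(y) = ∑_z v(y+z) v(z)` for the
autocorrelation of `v : ℤ_q → ℝ`. Since `μ(y + θ) = ∑_z μ(y+z) 1{θ = z}` and `μ(y+z)` is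
`𝒢`-measurable, the tower property gives `E[μ(y+θ)] = E[A_{μ_ω}(y)]`.
For a vector `v` of total mass one on a finite group of order `n`, `A_v(y) ≤ A_v(0)`
because `2ab ≤ a² + b²`, and `A_v(0) + A_v(y) = ½ ∑_z (v(y+z) + v(z))² ≥ 2/n` by
Cauchy–Schwarz; hence `|A_v(y) - 1/n| ≤ A_v(0) - 1/n`. As `μ_ω` has mass one almost surely,
integrating this gives `|E[δ(y+θ)]| ≤ X̄` for every shift `y`, and summing the squares over
the `q` shifts concludes.
-/

open MeasureTheory
open scoped ENNReal

section Autocorrelation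

variable {G : Type*} [AddCommGroup G] [Fintype G]

def autocorrelation (v : G → ℝ) (y : G) : ℝ := ∑ z, v (y + z) * v z

lemma autocorrelation_zero (v : G → ℝ) : autocorrelation v 0 = ∑ z, v z ^ 2 := by
  simp only [autocorrelation, zero_add, sq]

lemma sum_shift_add_mul_sq (v : G → ℝ) (y : G) (c : ℝ) :
    ∑ z, (v (y + z) + c * v z) ^ 2
      = (1 + c ^ 2) * autocorrelation v 0 + 2 * c * autocorrelation v y := by
  have hshift : ∑ z, v (y + z) ^ 2 = ∑ z, v z ^ 2 := Equiv.sum_comp (Equiv.addLeft y) (v · ^ 2)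
  have hexpand : ∀ z, (v (y + z) + c * v z) ^ 2
      = v (y + z) ^ 2 + 2 * c * (v (y + z) * v z) + c ^ 2 * v z ^ 2 := fun z => by ring
  rw [autocorrelation_zero]
  simp only [hexpand, Finset.sum_add_distrib, ← Finset.mul_sum, hshift, autocorrelation]
  ring

lemma autocorrelation_le_autocorrelation_zero (v : G → ℝ) (y : G) :
    autocorrelation v y ≤ autocorrelation v 0 := by
  have h := sum_shift_add_mul_sq v y (-1)
  have : 0 ≤ ∑ z, (v (y + z) + -1 * v z) ^ 2 := Finset.sum_nonneg fun z _ => sq_nonneg _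
  linarith

lemma two_div_card_le_autocorrelation_zero_add {v : G → ℝ} (hv : ∑ z, v z = 1) (y : G) :
    2 / Fintype.card G ≤ autocorrelation v 0 + autocorrelation v y := by
  have hcard : (0 : ℝ) < Fintype.card G := by exact_mod_cast Fintype.card_pos
  have hshift : ∑ z, v (y + z) = ∑ z, v z := Equiv.sum_comp (Equiv.addLeft y) v
  have hsum : ∑ z, (v (y + z) + 1 * v z) = 2 := by
    rw [Finset.sum_add_distrib, hshift, ← Finset.mul_sum, hv]; norm_num
  have hcs := sq_sum_le_card_mul_sum_sq (s := Finset.univ) (f := fun z => v (y + z) + 1 * v z)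
  rw [hsum, sum_shift_add_mul_sq, Finset.card_univ] at hcs
  rw [div_le_iff₀' hcard]
  linarith

lemma abs_autocorrelation_sub_inv_card_le {v : G → ℝ} (hv : ∑ z, v z = 1) (y : G) :
    |autocorrelation v y - (Fintype.card G : ℝ)⁻¹|
      ≤ autocorrelation v 0 - (Fintype.card G : ℝ)⁻¹ := by
  have h := two_div_card_le_autocorrelation_zero_add hv y
  rw [div_eq_mul_inv] at h
  rw [abs_le]
  constructor <;> linarith [autocorrelation_le_autocorrelation_zero v y]

end Autocorrelation

lemma comp_eq_sum_mul_indicator {Ω G : Type*} [Fintype G] (f : G → Ω → ℝ) (θ : Ω → G) :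
    (fun ω => f (θ ω) ω) = ∑ z, f z * {ω | θ ω = z}.indicator (fun _ => (1 : ℝ)) := by
  classical
  ext ω
  simp [Set.indicator_apply]

section Posterior

variable {Ω G : Type*} {m mΩ : MeasurableSpace Ω} {P : Measure Ω} {θ : Ω → G}

noncomputable def posterior (P : Measure Ω) (m : MeasurableSpace Ω) (θ : Ω → G) (z : G) :
    Ω → ℝ :=
  P[{ω | θ ω = z}.indicator (fun _ => (1 : ℝ)) | m]

lemma integrable_posterior (z : G) : Integrable (posterior P m θ z) P := integrable_condExp

lemma stronglyMeasurable_posterior (z : G) : StronglyMeasurable[m] (posterior P m θ z) :=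
  stronglyMeasurable_condExp

variable (hθ : ∀ z, MeasurableSet {ω | θ ω = z})
include hθ

lemma integrable_mul_indicator {f : Ω → ℝ} (hf : Integrable f P) (z : G) :
    Integrable (f * {ω | θ ω = z}.indicator (fun _ => (1 : ℝ))) P := by
  refine hf.mul_bdd (stronglyMeasurable_const.indicator (hθ z)).aestronglyMeasurable (c := 1) ?_
  exact .of_forall fun ω => (norm_indicator_le_norm_self _ ω).trans (by simp)

variable [Fintype G]

lemma integrable_posterior_comp_add [AddCommGroup G] (y : G) :
    Integrable (fun ω => posterior P m θ (y + θ ω) ω) P := by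
  rw [comp_eq_sum_mul_indicator (fun z => posterior P m θ (y + z)) θ]
  exact integrable_finsetSum' _ fun z _ =>
    integrable_mul_indicator hθ (integrable_posterior _) z

variable [IsFiniteMeasure P]

lemma ae_sum_posterior_eq_one (hm : m ≤ mΩ) : ∀ᵐ ω ∂P, ∑ z, posterior P m θ z ω = 1 := by
  have hsum : ∑ z, {ω | θ ω = z}.indicator (fun _ => (1 : ℝ)) = fun _ => 1 := by
    classical
    ext ω
    simp [Set.indicator_apply]
  have hcond := condExp_finsetSum (μ := P) (s := Finset.univ)
    (fun z _ => (integrable_const (1 : ℝ)).indicator (hθ z)) m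
  rw [hsum, condExp_const hm] at hcond
  filter_upwards [hcond] with ω hω
  simp only [Finset.sum_apply] at hω
  exact hω.symm

lemma condExp_posterior_comp_add [AddCommGroup G] (y : G) :
    P[fun ω => posterior P m θ (y + θ ω) ω | m]
      =ᵐ[P] fun ω => autocorrelation (posterior P m θ · ω) y := by
  rw [comp_eq_sum_mul_indicator (fun z => posterior P m θ (y + z)) θ]
  have hpull : ∀ᵐ ω ∂P, ∀ z,
      P[posterior P m θ (y + z) * {ω | θ ω = z}.indicator (fun _ => 1) | m] ω
        = posterior P m θ (y + z) ω * posterior P m θ z ω := ae_all_iff.2 fun z =>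
    condExp_mul_of_stronglyMeasurable_left (stronglyMeasurable_posterior _)
      (integrable_mul_indicator hθ (integrable_posterior _) z)
      ((integrable_const _).indicator (hθ z))
  have hsum := condExp_finsetSum (s := Finset.univ) (fun z _ =>
    integrable_mul_indicator hθ (integrable_posterior (P := P) (m := m) (θ := θ) (y + z)) z) m
  filter_upwards [hsum, hpull] with ω hsum hpull
  simp only [hsum, Finset.sum_apply, hpull, autocorrelation]

lemma integrable_autocorrelation_posterior [AddCommGroup G] (y : G) :
    Integrable (fun ω => autocorrelation (posterior P m θ · ω) y) P :=
  integrable_condExp.congr (condExp_posterior_comp_add hθ y)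

lemma integral_posterior_comp_add [AddCommGroup G] (hm : m ≤ mΩ) (y : G) :
    ∫ ω, posterior P m θ (y + θ ω) ω ∂P = ∫ ω, autocorrelation (posterior P m θ · ω) y ∂P := by
  rw [← integral_condExp hm]
  exact integral_congr_ae (condExp_posterior_comp_add hθ y)

lemma abs_integral_posterior_comp_add_sub_le [IsProbabilityMeasure P] [AddCommGroup G]
    (hm : m ≤ mΩ) (y : G) :
    |∫ ω, (posterior P m θ (y + θ ω) ω - (Fintype.card G : ℝ)⁻¹) ∂P|
      ≤ ∫ ω, (posterior P m θ (θ ω) ω - (Fintype.card G : ℝ)⁻¹) ∂P := by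
  set c := (Fintype.card G : ℝ)⁻¹
  have hcentered : ∀ y : G, ∫ ω, (posterior P m θ (y + θ ω) ω - c) ∂P
      = ∫ ω, (autocorrelation (posterior P m θ · ω) y - c) ∂P := fun y => by
    rw [integral_sub (integrable_posterior_comp_add hθ y) (integrable_const c),
      integral_sub (integrable_autocorrelation_posterior hθ y) (integrable_const c),
      integral_posterior_comp_add hθ hm]
  have hzero := hcentered 0
  simp only [zero_add] at hzero
  rw [hcentered, hzero]
  refine (abs_integral_le_integral_abs).trans (integral_mono_ae ?_ ?_ ?_)
  · exact ((integrable_autocorrelation_posterior hθ y).sub (integrable_const c)).abs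
  · exact (integrable_autocorrelation_posterior hθ 0).sub (integrable_const c)
  · filter_upwards [ae_sum_posterior_eq_one hθ hm] with ω hω
    exact abs_autocorrelation_sub_inv_card_le hω y

end Posterior

theorem statement_19_general
    (q : ℕ) [NeZero q]
    {Ω : Type*} [mΩ : MeasurableSpace Ω] (P : Measure Ω) [IsProbabilityMeasure P]
    (θ : Ω → ZMod q) (hθ : @Measurable Ω (ZMod q) mΩ ⊤ θ)
    (m : MeasurableSpace Ω) (hm : m ≤ mΩ)
    (μ : ZMod q → Ω → ℝ)
    (hμ : ∀ z : ZMod q, μ z = P[Set.indicator {ω | θ ω = z} (fun _ => (1 : ℝ)) | m])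
    (δ : ZMod q → Ω → ℝ) (hδ : ∀ z ω, δ z ω = μ z ω - (q : ℝ)⁻¹)
    (Xbar : ℝ) (hX : Xbar = ∫ ω, δ (θ ω) ω ∂P) :
    ∑ y : ZMod q, (∫ ω, δ (y + θ ω) ω ∂P) ^ 2 ≤ (q : ℝ) * Xbar ^ 2 := by
  have hδ' : δ = fun z ω => posterior P m θ z ω - (Fintype.card (ZMod q) : ℝ)⁻¹ := by
    ext z ω
    rw [hδ, hμ, ZMod.card, posterior]
  have hθ' (z : ZMod q) : MeasurableSet[mΩ] {ω | θ ω = z} :=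
    hθ (MeasurableSpace.measurableSet_top (s := {z}))
  have hbound (y : ZMod q) : (∫ ω, δ (y + θ ω) ω ∂P) ^ 2 ≤ Xbar ^ 2 := by
    rw [hX, sq_le_sq, hδ']
    exact (abs_integral_posterior_comp_add_sub_le hθ' hm y).trans (le_abs_self _)
  calc ∑ y : ZMod q, (∫ ω, δ (y + θ ω) ω ∂P) ^ 2 ≤ ∑ _y : ZMod q, Xbar ^ 2 :=
        Finset.sum_le_sum fun y _ => hbound y
    _ = q * Xbar ^ 2 := by simp

/-- Lemma: a maximal inequality for the centered posterior
marginals on ℤ_q. -/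
theorem statement_19
    (q : ℕ) [NeZero q] (hq : 2 ≤ q)
    {Ω : Type*} [mΩ : MeasurableSpace Ω] (P : Measure Ω) [IsProbabilityMeasure P]
    (θ : Ω → ZMod q) (hθ : @Measurable Ω (ZMod q) mΩ ⊤ θ)
    (hunif : ∀ z : ZMod q, P {ω | θ ω = z} = (q : ℝ≥0∞)⁻¹)
    (m : MeasurableSpace Ω) (hm : m ≤ mΩ)
    (μ : ZMod q → Ω → ℝ)
    (hμ : ∀ z : ZMod q, μ z = P[Set.indicator {ω | θ ω = z} (fun _ => (1 : ℝ)) | m])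
    (δ : ZMod q → Ω → ℝ) (hδ : ∀ z ω, δ z ω = μ z ω - (q : ℝ)⁻¹)
    (Xbar : ℝ) (hX : Xbar = ∫ ω, δ (θ ω) ω ∂P) :
    ∑ y : ZMod q, (∫ ω, δ (y + θ ω) ω ∂P) ^ 2 ≤ (q : ℝ) * Xbar ^ 2 :=
  statement_19_general q (mΩ := mΩ) P θ hθ m hm μ hμ δ hδ Xbar hX
end
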